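/- Let 𝒢 be a hereditary class with all forbidden induced subgraphs on at most c vertices, and let G be a forbidden induced subgraph for 𝒢^apex. Among all pairs of distinct subsets S, T ⊆ V(G) with G[S] and G[T] forbidden for 𝒢, choose one minimizing k = |S ∩ T|. Then |V(G)| ≤ (c−k)(k+2). -/

import Mathlib

/-! A forbidden graph `G` for `𝒢^apex` is covered by `S ∪ T` together with the sets `F w \ (S ∪ T)`
for `w ∈ S ∩ T`, where `F w` is a forbidden induced subgraph for `𝒢` avoiding `w` (one exists
because `G - w ∉ 𝒢`). Indeed, for `u ∉ S ∪ T` the graph `G - u` is apex, say `G - u - v ∈ 𝒢`;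
then every non-member of `𝒢` meets `{u, v}`, so `v ∈ S ∩ T` and `u ∈ F v`.
By minimality of `k = |S ∩ T|`, `F w` meets both `S` and `T` in at least `k` vertices, but meets
`S ∩ T` in fewer than `k`, so `|F w ∩ (S ∪ T)| ≥ k + 1` and `|F w \ (S ∪ T)| ≤ c - k - 1`.
Hence `|V| ≤ |S| + |T| - k + k (c - k - 1) ≤ (c - k)(k + 2)`. -/

open SimpleGraph

/-- A property of finite simple graphs. -/
abbrev GraphProp : Type 1 := ∀ (V : Type) [Finite V], SimpleGraph V → Prop

/-- A class of finite simple graphs: a property closed under isomorphism. -/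
structure GraphClass : Type 1 where
  Mem : GraphProp
  iso_closed : ∀ (V W : Type) [Finite V] [Finite W] (G : SimpleGraph V) (H : SimpleGraph W),
      Nonempty (G ≃g H) → Mem V G → Mem W H

/-- A property is hereditary if it is closed under taking induced subgraphs. -/
def Hereditary (P : GraphProp) : Prop :=
  ∀ (V : Type) [Finite V] (G : SimpleGraph V) (s : Set V), P V G → P s (G.induce s)

/-- `H` is a forbidden induced subgraph for `P`: it does not satisfy `P` but every
proper induced subgraph of it does. -/
def Forb (P : GraphProp) {V : Type} [Finite V] (H : SimpleGraph V) : Prop :=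
  ¬ P V H ∧ ∀ s : Set V, s ≠ Set.univ → P s (H.induce s)

/-- Membership in the apex class of `𝒢`: graphs containing a vertex whose deletion
lands in `𝒢` (together with the empty graph). -/
def ApexMem (𝒢 : GraphClass) : GraphProp :=
  fun V _ G => IsEmpty V ∨ ∃ v : V, 𝒢.Mem {u : V | u ≠ v} (G.induce {u : V | u ≠ v})

open Set

theorem Set.ncard_inter_lt_ncard_inter_union {α : Type*} [Finite α] {F S T : Set α} {w : α}
    (hw : w ∈ S ∩ T) (hwF : w ∉ F) (hS : (S ∩ T).ncard ≤ (F ∩ S).ncard)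
    (hT : (S ∩ T).ncard ≤ (F ∩ T).ncard) : (S ∩ T).ncard < (F ∩ (S ∪ T)).ncard := by
  have hsplit : (F ∩ S).ncard + (F ∩ T).ncard = (F ∩ (S ∪ T)).ncard + (F ∩ (S ∩ T)).ncard := by
    rw [inter_union_distrib_left, inter_inter_distrib_left, ncard_union_add_ncard_inter]
  have hlt : (F ∩ (S ∩ T)).ncard < (S ∩ T).ncard :=
    ncard_lt_ncard ⟨inter_subset_right, fun h => hwF (h hw).1⟩
  omega

theorem Set.ncard_le_ncard_mul_of_subset_biUnion {ι α : Type*} [Finite α] {s : Set α} {t : Set ι}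
    {f : ι → Set α} {m : ℕ} (ht : t.Finite) (hs : s ⊆ ⋃ i ∈ t, f i)
    (hf : ∀ i ∈ t, (f i).ncard ≤ m) : s.ncard ≤ t.ncard * m :=
  calc s.ncard ≤ (⋃ i ∈ ht.toFinset, f i).ncard := ncard_le_ncard (by simpa using hs)
    _ ≤ ∑ i ∈ ht.toFinset, (f i).ncard := ht.toFinset.set_ncard_biUnion_le f
    _ ≤ ht.toFinset.card • m := Finset.sum_le_card_nsmul _ _ _ (by simpa using hf)
    _ = t.ncard * m := by rw [smul_eq_mul, ncard_eq_toFinset_card t ht]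

theorem Nat.le_sub_mul_add_two_of_add_le {n c k : ℕ} (hk : 0 < k → k < c)
    (h : n + k ≤ k * (c - (k + 1)) + 2 * c) : n ≤ (c - k) * (k + 2) := by
  rcases Nat.eq_zero_or_pos k with rfl | hpos
  · omega
  obtain ⟨d, rfl⟩ := Nat.exists_eq_add_of_lt (hk hpos)
  rw [show k + d + 1 - (k + 1) = d by omega, show k + d + 1 - k = d + 1 by omega] at *
  nlinarith

noncomputable def SimpleGraph.induceInduceIso {V : Type*} (G : SimpleGraph V) (A : Set V)
    (s : Set A) :
    (G.induce A).induce s ≃g G.induce (Subtype.val '' s) where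
  toEquiv := Equiv.Set.image _ s Subtype.val_injective
  map_rel_iff' := by
    rintro ⟨⟨a, hA⟩, ha⟩ ⟨⟨b, hB⟩, hb⟩
    simp [Equiv.Set.image, Equiv.Set.imageOfInjOn]

namespace GraphClass

variable (𝒢 : GraphClass) {V : Type} [Finite V] (G : SimpleGraph V)

theorem mem_induce_induce_iff {A : Set V} {s : Set A} {t : Set V} (ht : Subtype.val '' s = t) :
    𝒢.Mem s ((G.induce A).induce s) ↔ 𝒢.Mem t (G.induce t) := by
  subst ht
  exact ⟨𝒢.iso_closed _ _ _ _ ⟨G.induceInduceIso A s⟩,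
    𝒢.iso_closed _ _ _ _ ⟨(G.induceInduceIso A s).symm⟩⟩

theorem exists_forb_subset {A : Set V} (hA : ¬ 𝒢.Mem A (G.induce A)) :
    ∃ F ⊆ A, Forb 𝒢.Mem (G.induce F) := by
  obtain ⟨F, hFA, hF, hmin⟩ :=
    exists_minimal_le_of_wellFoundedLT (fun B : Set V => ¬ 𝒢.Mem B (G.induce B)) A hA
  refine ⟨F, hFA, hF, fun s hs => (𝒢.mem_induce_induce_iff G rfl).2 (not_not.1 fun hs' => ?_)⟩
  have hsub : Subtype.val '' s ⊆ F := Subtype.coe_image_subset F s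
  refine hs (Subtype.val_injective.image_injective ?_)
  rw [image_univ, Subtype.range_coe]
  exact (hmin hs' hsub).antisymm' hsub

end GraphClass

theorem Hereditary.mem_induce_of_subset {𝒢 : GraphClass} (hher : Hereditary 𝒢.Mem) {V : Type}
    [Finite V] (G : SimpleGraph V) {A B : Set V} (hAB : A ⊆ B) (hB : 𝒢.Mem B (G.induce B)) :
    𝒢.Mem A (G.induce A) :=
  (𝒢.mem_induce_induce_iff G (by rw [Subtype.image_preimage_coe, inter_eq_right.2 hAB])).1
    (hher _ _ (Subtype.val ⁻¹' A) hB)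

section Apex

variable {𝒢 : GraphClass} (hher : Hereditary 𝒢.Mem) {V : Type} [Finite V] {G : SimpleGraph V}
include hher

theorem Forb.exists_mem_or_mem_of_apexMem (hG : Forb (ApexMem 𝒢) G) {u x : V} (hxu : x ≠ u) :
    ∃ v, ∀ A : Set V, ¬ 𝒢.Mem A (G.induce A) → u ∈ A ∨ v ∈ A := by
  obtain hempty | ⟨v, hv⟩ :=
    hG.2 {y | y ≠ u} ((ne_univ_iff_exists_notMem _).2 ⟨u, fun h => h rfl⟩)
  · exact (hempty.false ⟨x, hxu⟩).elim
  refine ⟨v, fun A hA => ?_⟩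
  by_contra! huv
  refine hA (hher.mem_induce_of_subset G (fun y hy => ?_) ((𝒢.mem_induce_induce_iff G rfl).1 hv))
  exact ⟨⟨y, fun h => huv.1 (h ▸ hy)⟩, fun h => huv.2 (h ▸ hy), rfl⟩

theorem Forb.compl_union_subset_biUnion_of_apexMem (hG : Forb (ApexMem 𝒢) G) {S T : Set V}
    (hST : S ≠ T) (hS : ¬ 𝒢.Mem S (G.induce S)) (hT : ¬ 𝒢.Mem T (G.induce T)) {F : V → Set V}
    (hFw : ∀ w, w ∉ F w) (hF : ∀ w, ¬ 𝒢.Mem (F w) (G.induce (F w))) :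
    (S ∪ T)ᶜ ⊆ ⋃ w ∈ S ∩ T, F w \ (S ∪ T) := by
  intro u hu
  obtain ⟨x, hx⟩ : (S ∪ T).Nonempty := nonempty_iff_ne_empty.2 fun h => by
    obtain ⟨rfl, rfl⟩ := union_empty_iff.1 h
    exact hST rfl
  obtain ⟨v, hv⟩ := hG.exists_mem_or_mem_of_apexMem hher (ne_of_mem_of_not_mem hx hu)
  have hvS : v ∈ S := (hv S hS).resolve_left fun h => hu (.inl h)
  have hvT : v ∈ T := (hv T hT).resolve_left fun h => hu (.inr h)
  exact mem_biUnion ⟨hvS, hvT⟩ ⟨(hv _ (hF v)).resolve_right (hFw v), hu⟩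

end Apex

/-- With S, T a pair of distinct subsets inducing forbidden subgraphs for 𝒢 and
minimizing k = |S ∩ T|, we get |V(G)| ≤ (c − k)(k + 2). -/
theorem apex_forbidden_card_bound (𝒢 : GraphClass) (hher : Hereditary 𝒢.Mem) (c : ℕ)
    (hc : ∀ (V : Type) [Finite V] (H : SimpleGraph V), Forb 𝒢.Mem H → Nat.card V ≤ c)
    (V : Type) [Finite V] (G : SimpleGraph V) (hG : Forb (ApexMem 𝒢) G)
    (S T : Set V) (hST : S ≠ T)
    (hS : Forb 𝒢.Mem (G.induce S)) (hT : Forb 𝒢.Mem (G.induce T))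
    (hmin : ∀ S' T' : Set V, S' ≠ T' →
      Forb 𝒢.Mem (G.induce S') → Forb 𝒢.Mem (G.induce T') →
      Nat.card ↥(S ∩ T) ≤ Nat.card ↥(S' ∩ T')) :
    Nat.card V ≤ (c - Nat.card ↥(S ∩ T)) * (Nat.card ↥(S ∩ T) + 2) := by
  choose F hFsub hF using fun w => 𝒢.exists_forb_subset G fun h => hG.1 (.inr ⟨w, h⟩)
  have hwF : ∀ w, w ∉ F w := fun w hw => hFsub w hw rfl
  have hcard : ∀ A : Set V, Forb 𝒢.Mem (G.induce A) → A.ncard ≤ c :=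
    fun A hA => Nat.card_coe_set_eq A ▸ hc _ _ hA
  simp only [Nat.card_coe_set_eq] at hmin ⊢
  set k := (S ∩ T).ncard
  have hlarge : ∀ w ∈ S ∩ T, k < (F w ∩ (S ∪ T)).ncard := fun w hw =>
    ncard_inter_lt_ncard_inter_union hw (hwF w)
      (hmin _ _ (ne_of_mem_of_not_mem' hw.1 (hwF w)).symm (hF w) hS)
      (hmin _ _ (ne_of_mem_of_not_mem' hw.2 (hwF w)).symm (hF w) hT)
  have hprivate : ∀ w ∈ S ∩ T, (F w \ (S ∪ T)).ncard ≤ c - (k + 1) := fun w hw => by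
    have := ncard_inter_add_ncard_sdiff_eq_ncard (F w) (S ∪ T)
    have := hlarge w hw
    have := hcard _ (hF w)
    omega
  have hkc : 0 < k → k < c := fun hk => by
    obtain ⟨w, hw⟩ := nonempty_of_ncard_ne_zero hk.ne'
    exact (hlarge w hw).trans_le ((ncard_le_ncard inter_subset_left).trans (hcard _ (hF w)))
  have houtside : ((S ∪ T)ᶜ).ncard ≤ k * (c - (k + 1)) :=
    ncard_le_ncard_mul_of_subset_biUnion (toFinite _)
      (hG.compl_union_subset_biUnion_of_apexMem hher hST hS.1 hT.1 hwF fun w => (hF w).1) hprivate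
  have hunion := ncard_union_add_ncard_inter S T
  exact Nat.le_sub_mul_add_two_of_add_le hkc <| by
    linarith [ncard_add_ncard_compl (S ∪ T), hcard S hS, hcard T hT]
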